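/- Let b be an integer, let G be a graph with a widespread request and a list assignment L on V(G). Suppose G is L-colorable, G has a weak (F,k,b)-resolution, and there exists a probability distribution on L-colorings φ of G such that for every v ∈ Fix(G) and every c ∈ L(v), Prob[φ(v) = c] ≥ ε. Then G with L is weakly (ε/b)-flexible, i.e., every widespread request is (ε/b)-satisfiable. -/

import Mathlib

open Finset

/-- A proper coloring of `G` from the lists `L`. -/
def IsProperListColoring {V : Type} (G : SimpleGraph V) (L : V → Finset ℕ) (φ : V → ℕ) : Prop :=
  (∀ v, φ v ∈ L v) ∧ ∀ ⦃u v : V⦄, G.Adj u v → φ u ≠ φ v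

/-- `G` is weighted `ε`-flexible for lists of size `k`. -/
def WeightedFlexible {V : Type} [Fintype V] (G : SimpleGraph V) (k : ℕ) (ε : ℝ) : Prop :=
  ∀ L : V → Finset ℕ, (∀ v, k ≤ (L v).card) →
    ∀ w : V → ℕ → ℝ, (∀ v c, 0 ≤ w v c) → (∀ v c, c ∉ L v → w v c = 0) →
      ∃ φ : V → ℕ, IsProperListColoring G L φ ∧
        ε * (∑ v, ∑ c ∈ L v, w v c) ≤ ∑ v, w v (φ v)

/-- `G` is weakly `ε`-flexible for lists of size `k`. -/
def WeaklyFlexible {V : Type} [Fintype V] (G : SimpleGraph V) (k : ℕ) (ε : ℝ) : Prop :=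
  ∀ L : V → Finset ℕ, (∀ v, k ≤ (L v).card) →
    ∀ r : V → ℕ, (∀ v, r v ∈ L v) →
      ∃ φ : V → ℕ, IsProperListColoring G L φ ∧
        ε * (Fintype.card V : ℝ) ≤ ((Finset.univ.filter fun v => φ v = r v).card : ℝ)

/-- `G` has a drawing in the plane: vertices go to distinct points, edges to simple
continuous arcs joining their endpoints, arcs internally avoid vertices and each other. -/
def HasPlanarEmbedding {V : Type} (G : SimpleGraph V) : Prop :=
  ∃ (pos : V → ℝ × ℝ) (γ : Sym2 V → ℝ → ℝ × ℝ),
    Function.Injective pos ∧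
    (∀ e ∈ G.edgeSet, ContinuousOn (γ e) (Set.Icc 0 1)) ∧
    (∀ e ∈ G.edgeSet, Set.InjOn (γ e) (Set.Icc 0 1)) ∧
    (∀ u v : V, G.Adj u v → ({γ s(u, v) 0, γ s(u, v) 1} : Set (ℝ × ℝ)) = {pos u, pos v}) ∧
    (∀ e ∈ G.edgeSet, ∀ t ∈ Set.Ioo (0 : ℝ) 1, γ e t ∉ Set.range pos) ∧
    (∀ e ∈ G.edgeSet, ∀ f ∈ G.edgeSet, e ≠ f →
      ∀ s ∈ Set.Ioo (0 : ℝ) 1, ∀ t ∈ Set.Ioo (0 : ℝ) 1, γ e s ≠ γ f t)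

/-- `G` contains a copy of the graph `p.2` as a (not necessarily induced) subgraph. -/
def ContainsCopy {V : Type} (G : SimpleGraph V) (p : (W : Type) × SimpleGraph W) : Prop :=
  ∃ f : p.2 →g G, Function.Injective f

/-- `K₄` minus an edge (the diamond). -/
def diamondGraph : SimpleGraph (Fin 4) :=
  SimpleGraph.fromEdgeSet {s(0, 1), s(0, 2), s(0, 3), s(1, 2), s(1, 3)}

/-- The house: a `3`-cycle `0 1 4` and a `4`-cycle `0 1 2 3` sharing the edge `01`. -/
def houseGraph : SimpleGraph (Fin 5) :=
  SimpleGraph.fromEdgeSet {s(0, 1), s(1, 2), s(2, 3), s(3, 0), s(0, 4), s(1, 4)}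

/-- Two triangles sharing exactly one vertex. -/
def bowtieGraph : SimpleGraph (Fin 5) :=
  SimpleGraph.fromEdgeSet {s(0, 1), s(1, 2), s(0, 2), s(0, 3), s(3, 4), s(0, 4)}

/-- Two disjoint triangles joined by an edge. -/
def twoTrianglesEdgeGraph : SimpleGraph (Fin 6) :=
  SimpleGraph.fromEdgeSet {s(0, 1), s(1, 2), s(0, 2), s(3, 4), s(4, 5), s(3, 5), s(0, 3)}

def IsTriangle {V : Type} (G : SimpleGraph V) (a b c : V) : Prop :=
  G.Adj a b ∧ G.Adj b c ∧ G.Adj a c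

/-- Any two distinct `3`-cycles of `G` are at distance at least `2`. -/
def TrianglesFarApart {V : Type} (G : SimpleGraph V) : Prop :=
  ∀ a b c a' b' c' : V, IsTriangle G a b c → IsTriangle G a' b' c' →
    ({a, b, c} : Set V) ≠ ({a', b', c'} : Set V) →
    ∀ x ∈ ({a, b, c} : Set V), ∀ y ∈ ({a', b', c'} : Set V), x ≠ y ∧ ¬ G.Adj x y

/-- Every nonempty (induced) subgraph of `G` has a vertex of degree at most `d`. -/
def Degenerate {V : Type} (G : SimpleGraph V) [DecidableRel G.Adj] (d : ℕ) : Prop :=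
  ∀ S : Finset V, S.Nonempty → ∃ v ∈ S, (S.filter fun w => G.Adj v w).card ≤ d

/-- The degree of `v` into the set `A`. -/
def degIn {V : Type} (G : SimpleGraph V) [DecidableRel G.Adj] (A : Finset V) (v : V) : ℕ :=
  (A.filter fun w => G.Adj v w).card

/-- The graph induced by `G` on `T` is colorable from every list assignment
with list sizes at least `f`. -/
def ColorableOn {V : Type} (G : SimpleGraph V) (T : Finset V) (f : V → ℤ) : Prop :=
  ∀ L : V → Finset ℕ, (∀ v ∈ T, f v ≤ ((L v).card : ℤ)) →
    ∃ φ : V → ℕ, (∀ v ∈ T, φ v ∈ L v) ∧ ∀ u ∈ T, ∀ v ∈ T, G.Adj u v → φ u ≠ φ v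

/-- The subgraph of `G` induced on `S`, together with one additional vertex
adjacent exactly to the vertices of `I`. -/
def apexGraph {V : Type} (G : SimpleGraph V) (S I : Finset V) :
    SimpleGraph ({x // x ∈ S} ⊕ Unit) where
  Adj x y :=
    match x, y with
    | Sum.inl a, Sum.inl b => G.Adj a.1 b.1
    | Sum.inl a, Sum.inr _ => a.1 ∈ I
    | Sum.inr _, Sum.inl b => b.1 ∈ I
    | Sum.inr _, Sum.inr _ => False
  symm := by
    constructor
    rintro (a | a) (b | b) h
    · exact G.symm.symm _ _ h
    · exact h
    · exact h
    · exact h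
  loopless := by
    constructor
    rintro (a | a) h
    · exact G.loopless.irrefl _ h
    · exact h

/-- `I ⊆ S` is `F`-forbidding (for the subgraph of `G` induced on `S`):
the induced subgraph plus an apex over `I` contains no member of `F` as a subgraph. -/
def Forbidding {V : Type} (F : Set ((W : Type) × SimpleGraph W)) (G : SimpleGraph V)
    (S I : Finset V) : Prop :=
  ∀ p ∈ F, ¬ ContainsCopy (apexGraph G S I) p

/-- The subgraph of `G` induced on `S` is `(F,k)`-boundary-reducible with boundary `B`,
inside the ambient induced subgraph of `G` on `A` (degrees `deg_G` are measured in `A`). -/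
def BoundaryReducibleIn {V : Type} [DecidableEq V] (F : Set ((W : Type) × SimpleGraph W))
    (k : ℕ) (G : SimpleGraph V) [DecidableRel G.Adj] (A S B : Finset V) : Prop :=
  S ⊆ A ∧ B ⊂ S ∧
  (∀ v ∈ S \ B, ColorableOn G (S \ B)
      (Function.update (fun w => (k : ℤ) - degIn G A w + degIn G (S \ B) w) v 1)) ∧
  (∀ I : Finset V, I ⊆ S \ B → (I.card : ℤ) ≤ (k : ℤ) - 2 → Forbidding F G S I →
    ColorableOn G (S \ B)
      (fun w => (k : ℤ) - degIn G A w + degIn G (S \ B) w - if w ∈ I then 1 else 0))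

/-- Weak `(F,k)`-boundary-reducibility, witnessed by the set `Fx = Fix(H)`. -/
def WeakBoundaryReducibleInWith {V : Type} [DecidableEq V]
    (F : Set ((W : Type) × SimpleGraph W)) (k : ℕ) (G : SimpleGraph V) [DecidableRel G.Adj]
    (A S B Fx : Finset V) : Prop :=
  S ⊆ A ∧ B ⊂ S ∧ Fx.Nonempty ∧ Fx ⊆ S \ B ∧
  (∀ v ∈ Fx, ColorableOn G (S \ B)
      (Function.update (fun w => (k : ℤ) - degIn G A w + degIn G (S \ B) w) v 1)) ∧
  (∀ I : Finset V, I ⊆ S \ B → (I.card : ℤ) ≤ (k : ℤ) - 2 → Forbidding F G S I →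
    ColorableOn G (S \ B)
      (fun w => (k : ℤ) - degIn G A w + degIn G (S \ B) w - if w ∈ I then 1 else 0))

/-- An `(F,k,b)`-resolution of `G`: nested induced subgraphs `G_i` of `G` on the vertex
sets `A i`, where `G_i` is obtained from `G_{i-1}` by deleting `H_i - B_i` for an induced
`(F,k)`-boundary-reducible subgraph `H_i` (on vertex set `S i`) of `G_{i-1}`,
and the last graph `G_M` is itself reducible with empty boundary and has at most `b` vertices. -/
structure Resolution {V : Type} [Fintype V] [DecidableEq V]
    (F : Set ((W : Type) × SimpleGraph W)) (k b : ℕ)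
    (G : SimpleGraph V) [DecidableRel G.Adj] where
  M : ℕ
  S : ℕ → Finset V
  B : ℕ → Finset V
  A : ℕ → Finset V
  hA0 : A 0 = Finset.univ
  hAstep : ∀ i, 1 ≤ i → i ≤ M → A i = A (i - 1) \ (S i \ B i)
  avoid : ∀ p ∈ F, ¬ ContainsCopy G p
  red : ∀ i, 1 ≤ i → i ≤ M → BoundaryReducibleIn F k G (A (i - 1)) (S i) (B i)
  size : ∀ i, 1 ≤ i → i ≤ M → (S i \ B i).card ≤ b
  last : BoundaryReducibleIn F k G (A M) (A M) ∅
  lastsize : (A M).card ≤ b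

/-- A weak `(F,k,b)`-resolution of `G`; `Fx i` is the set `Fix(H_i)` for the `i`-th
reducible subgraph (`1 ≤ i ≤ M`), and `Fx 0` is the `Fix` set of the last graph `G_M`. -/
structure WeakResolution {V : Type} [Fintype V] [DecidableEq V]
    (F : Set ((W : Type) × SimpleGraph W)) (k b : ℕ)
    (G : SimpleGraph V) [DecidableRel G.Adj] where
  M : ℕ
  S : ℕ → Finset V
  B : ℕ → Finset V
  A : ℕ → Finset V
  Fx : ℕ → Finset V
  hA0 : A 0 = Finset.univ
  hAstep : ∀ i, 1 ≤ i → i ≤ M → A i = A (i - 1) \ (S i \ B i)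
  avoid : ∀ p ∈ F, ¬ ContainsCopy G p
  red : ∀ i, 1 ≤ i → i ≤ M → WeakBoundaryReducibleInWith F k G (A (i - 1)) (S i) (B i) (Fx i)
  size : ∀ i, 1 ≤ i → i ≤ M → (S i \ B i).card ≤ b
  last : WeakBoundaryReducibleInWith F k G (A M) (A M) ∅ (Fx 0)
  lastsize : (A M).card ≤ b

/-- `Fix(G)`: the union of the `Fix` sets of the reducible subgraphs of the resolution. -/
def WeakResolution.FixG {V : Type} [Fintype V] [DecidableEq V]
    {F : Set ((W : Type) × SimpleGraph W)} {k b : ℕ}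
    {G : SimpleGraph V} [DecidableRel G.Adj] (R : WeakResolution F k b G) : Finset V :=
  (Finset.range (R.M + 1)).biUnion R.Fx

/-! The pieces `H_i − B_i` (and the last graph `G_M`) cover `V(G)`, are pairwise disjoint, have at
most `b` vertices each, and each contains a vertex of `Fix(G)`; hence `|V(G)| ≤ b · |Fix(G)|`.
On the other hand, by double counting, the expected number of vertices of `Fix(G)` on which a
random coloring agrees with `r` is at least `ε · |Fix(G)|`, so some coloring in the support of
the distribution agrees with `r` on at least that many vertices. -/

lemma Finset.exists_le_of_le_sum_mul {ι : Type*} {s : Finset ι} {w f : ι → ℝ} {a : ℝ}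
    (hw : ∀ i ∈ s, 0 ≤ w i) (hsum : ∑ i ∈ s, w i = 1) (ha : a ≤ ∑ i ∈ s, w i * f i) :
    ∃ i ∈ s, a ≤ f i := by
  have hs : s.Nonempty := nonempty_of_sum_ne_zero (by rw [hsum]; exact one_ne_zero)
  obtain ⟨j, hj, hmax⟩ := s.exists_max_image f hs
  refine ⟨j, hj, ha.trans ?_⟩
  calc ∑ i ∈ s, w i * f i ≤ ∑ i ∈ s, w i * f j :=
        sum_le_sum fun i hi => mul_le_mul_of_nonneg_left (hmax i hi) (hw i hi)
    _ = f j := by rw [← sum_mul, hsum, one_mul]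

lemma Finset.sum_mul_card_filter_eq_sum_sum_filter {α β : Type*} (D : Finset α) (X : Finset β)
    (μ : α → ℝ) (P : α → β → Prop) [∀ a b, Decidable (P a b)] :
    ∑ a ∈ D, μ a * #(X.filter (P a)) = ∑ x ∈ X, ∑ a ∈ D.filter (P · x), μ a := by
  simp only [card_filter, Nat.cast_sum, Nat.cast_ite, Nat.cast_one, Nat.cast_zero, mul_sum,
    mul_ite, mul_one, mul_zero, sum_filter]
  exact sum_comm

lemma div_mul_le_of_le_mul {ε b n m x : ℝ} (hb : 0 ≤ b) (hn : 0 ≤ n) (hnm : n ≤ b * m)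
    (hm : ε * m ≤ x) (hx : 0 ≤ x) : ε / b * n ≤ x := by
  rcases le_or_gt ε 0 with hε | hε
  · exact (mul_nonpos_of_nonpos_of_nonneg (div_nonpos_of_nonpos_of_nonneg hε hb) hn).trans hx
  rcases hb.eq_or_lt with rfl | hb
  · simpa using hx
  calc ε / b * n ≤ ε / b * (b * m) := by gcongr
    _ = ε * m := by field_simp
    _ ≤ x := hm

namespace WeakResolution

variable {V : Type} [Fintype V] [DecidableEq V] {F : Set ((W : Type) × SimpleGraph W)} {k b : ℕ}
  {G : SimpleGraph V} [DecidableRel G.Adj] (R : WeakResolution F k b G)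

lemma A_subset_A_pred {j : ℕ} (h1 : 1 ≤ j) (hj : j ≤ R.M) : R.A j ⊆ R.A (j - 1) := by
  rw [R.hAstep j h1 hj]
  exact sdiff_subset

lemma A_subset_A_of_le {i j : ℕ} (hij : i ≤ j) (hj : j ≤ R.M) : R.A j ⊆ R.A i := by
  induction j, hij using Nat.le_induction with
  | base => exact Subset.rfl
  | succ j hij ih =>
    exact (R.A_subset_A_pred (by omega) hj).trans (ih (by omega))

lemma disjoint_A_piece {i j : ℕ} (h1 : 1 ≤ i) (hij : i ≤ j) (hj : j ≤ R.M) :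
    Disjoint (R.A j) (R.S i \ R.B i) := by
  refine Disjoint.mono_left (R.A_subset_A_of_le hij hj) ?_
  rw [R.hAstep i h1 (hij.trans hj)]
  exact sdiff_disjoint

lemma Fx_subset_piece {i : ℕ} (h1 : 1 ≤ i) (hi : i ≤ R.M) : R.Fx i ⊆ R.S i \ R.B i :=
  (R.red i h1 hi).2.2.2.1

lemma Fx_subset_A_pred {i : ℕ} (h1 : 1 ≤ i) (hi : i ≤ R.M) : R.Fx i ⊆ R.A (i - 1) :=
  (R.Fx_subset_piece h1 hi).trans (sdiff_subset.trans (R.red i h1 hi).1)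

lemma Fx_zero_subset_A : R.Fx 0 ⊆ R.A R.M := by
  simpa using R.last.2.2.2.1

lemma Fx_nonempty {i : ℕ} (hi : i ≤ R.M) : (R.Fx i).Nonempty := by
  rcases Nat.eq_zero_or_pos i with rfl | h1
  · exact R.last.2.2.1
  · exact (R.red i h1 hi).2.2.1

lemma disjoint_Fx {i j : ℕ} (hij : i < j) (hj : j ≤ R.M) : Disjoint (R.Fx i) (R.Fx j) := by
  rcases Nat.eq_zero_or_pos i with rfl | h1
  · exact (R.disjoint_A_piece (by omega) hj le_rfl).mono R.Fx_zero_subset_A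
      (R.Fx_subset_piece (by omega) hj)
  · exact (R.disjoint_A_piece h1 (by omega) (by omega)).symm.mono
      (R.Fx_subset_piece h1 (by omega)) (R.Fx_subset_A_pred (by omega) hj)

lemma succ_M_le_card_FixG : R.M + 1 ≤ #R.FixG := by
  have hdisj : (range (R.M + 1) : Set ℕ).PairwiseDisjoint R.Fx := by
    intro i hi j hj hij
    simp only [coe_range, Set.mem_Iio] at hi hj
    rcases hij.lt_or_gt with h | h
    · exact R.disjoint_Fx h (by omega)
    · exact (R.disjoint_Fx h (by omega)).symm
  calc R.M + 1 = ∑ _i ∈ range (R.M + 1), 1 := by simp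
    _ ≤ ∑ i ∈ range (R.M + 1), #(R.Fx i) :=
        sum_le_sum fun i hi => card_pos.mpr (R.Fx_nonempty (Nat.lt_succ_iff.mp (mem_range.mp hi)))
    _ = #R.FixG := (card_biUnion hdisj).symm

lemma card_A_sub_le {i : ℕ} (hi : i ≤ R.M) : #(R.A (R.M - i)) ≤ (i + 1) * b := by
  induction i with
  | zero => simpa using R.lastsize
  | succ i ih =>
    have h1 : 1 ≤ R.M - i := by omega
    have hA : R.A (R.M - (i + 1)) ⊆ R.A (R.M - i) ∪ (R.S (R.M - i) \ R.B (R.M - i)) := by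
      rw [R.hAstep _ h1 (Nat.sub_le _ _), show R.M - i - 1 = R.M - (i + 1) by omega]
      exact le_sdiff_sup
    calc #(R.A (R.M - (i + 1))) ≤ #(R.A (R.M - i)) + #(R.S (R.M - i) \ R.B (R.M - i)) :=
          (card_le_card hA).trans (card_union_le _ _)
      _ ≤ (i + 1) * b + b := add_le_add (ih (by omega)) (R.size _ h1 (Nat.sub_le _ _))
      _ = (i + 1 + 1) * b := by ring

lemma card_le_mul_card_FixG : Fintype.card V ≤ b * #R.FixG :=
  calc Fintype.card V = #(R.A (R.M - R.M)) := by rw [Nat.sub_self, R.hA0, card_univ]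
    _ ≤ (R.M + 1) * b := R.card_A_sub_le le_rfl
    _ ≤ b * #R.FixG := by rw [mul_comm]; exact Nat.mul_le_mul_left b R.succ_M_le_card_FixG

end WeakResolution

theorem distribution_implies_weaklyFlexible_general (k b : ℕ)
    (F : Set ((W : Type) × SimpleGraph W))
    (V : Type) [Fintype V] [DecidableEq V] (G : SimpleGraph V) [DecidableRel G.Adj]
    (L : V → Finset ℕ) (ε : ℝ)
    (R : WeakResolution F k b G)
    (D : Finset (V → ℕ)) (μ : (V → ℕ) → ℝ)
    (hcol : ∀ φ ∈ D, IsProperListColoring G L φ)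
    (hnn : ∀ φ ∈ D, 0 ≤ μ φ)
    (hsum : (∑ φ ∈ D, μ φ) = 1)
    (hprob : ∀ v ∈ R.FixG, ∀ c ∈ L v, ε ≤ ∑ φ ∈ D.filter (fun φ => φ v = c), μ φ)
    (r : V → ℕ) (hr : ∀ v, r v ∈ L v) :
    ∃ φ : V → ℕ, IsProperListColoring G L φ ∧
      (ε / b) * (Fintype.card V : ℝ) ≤ ((Finset.univ.filter fun v => φ v = r v).card : ℝ) := by
  have hexpect : ε * #R.FixG ≤ ∑ φ ∈ D, μ φ * #(R.FixG.filter fun v => φ v = r v) := by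
    rw [sum_mul_card_filter_eq_sum_sum_filter, mul_comm, ← nsmul_eq_mul]
    exact card_nsmul_le_sum _ _ _ fun v hv => hprob v hv (r v) (hr v)
  obtain ⟨φ, hφD, hφ⟩ := exists_le_of_le_sum_mul hnn hsum hexpect
  refine ⟨φ, hcol φ hφD, div_mul_le_of_le_mul (Nat.cast_nonneg b) (Nat.cast_nonneg _)
    (by exact_mod_cast R.card_le_mul_card_FixG) (hφ.trans ?_) (Nat.cast_nonneg _)⟩
  exact_mod_cast card_le_card (filter_subset_filter _ (subset_univ _))

theorem distribution_implies_weaklyFlexible (k b : ℕ)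
    (F : Set ((W : Type) × SimpleGraph W))
    (V : Type) [Fintype V] [DecidableEq V] (G : SimpleGraph V) [DecidableRel G.Adj]
    (L : V → Finset ℕ) (ε : ℝ)
    (hcolorable : ∃ φ, IsProperListColoring G L φ)
    (R : WeakResolution F k b G)
    (D : Finset (V → ℕ)) (μ : (V → ℕ) → ℝ)
    (hcol : ∀ φ ∈ D, IsProperListColoring G L φ)
    (hnn : ∀ φ ∈ D, 0 ≤ μ φ)
    (hsum : (∑ φ ∈ D, μ φ) = 1)
    (hprob : ∀ v ∈ R.FixG, ∀ c ∈ L v, ε ≤ ∑ φ ∈ D.filter (fun φ => φ v = c), μ φ)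
    (r : V → ℕ) (hr : ∀ v, r v ∈ L v) :
    ∃ φ : V → ℕ, IsProperListColoring G L φ ∧
      (ε / b) * (Fintype.card V : ℝ) ≤ ((Finset.univ.filter fun v => φ v = r v).card : ℝ) :=
  distribution_implies_weaklyFlexible_general k b F V G L ε R D μ hcol hnn hsum hprob r hr
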